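/- arXiv:2509.01359 — 5 statements merged into one kernel-verified Lean document; each statement's English description precedes it below -/
import Mathlib

section
/- Let H and H_I be Hermitian n×n complex matrices. Suppose H has an orthonormal eigenbasis Ψ_0, Ψ_1, …, Ψ_{n-1} with H Ψ_j = E_j Ψ_j, where E_0 is the smallest eigenvalue and is simple (E_j > E_0 for all j ≠ 0). Let G⁺ be any n×n matrix satisfying the four Moore–Penrose conditions with respect to A := H − E_0·I, namely A G⁺ A = A, G⁺ A G⁺ = G⁺, (A G⁺)* = A G⁺, and (G⁺ A)* = G⁺ A. Then ∑_{j ≠ 0} |⟨Ψ_j, H_I Ψ_0⟩|² / (E_j − E_0)² = ‖G⁺ H_I Ψ_0‖₂², where ‖·‖₂ is the Euclidean norm on ℂⁿ. -/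
open Matrix
open scoped ComplexInnerProductSpace

/-- The identification of `Fin n → ℂ` with the Euclidean space `ℂⁿ`,
used to speak about the Euclidean (`ℓ²`) norm and inner product of vectors. -/
noncomputable def toE {n : ℕ} (v : Fin n → ℂ) : EuclideanSpace ℂ (Fin n) :=
  (WithLp.equiv 2 (Fin n → ℂ)).symm v

/-!
For Hermitian `A`, the Penrose equations force a pseudoinverse `G` to act on every eigenvector
of `A` as the scalar pseudoinverse of its eigenvalue: `A v = μ v` gives `G v = μ⁻¹ v`, with
`0⁻¹ = 0`. Since `Gᴴ` is again a pseudoinverse of `A`, the coefficient of `G H_I Ψ₀` along `Ψ_j`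
is `⟪Gᴴ Ψ_j, H_I Ψ₀⟫ = ⟪Ψ_j, H_I Ψ₀⟫ / (E_j - E_0)`, and Parseval's identity in the orthonormal
eigenbasis gives the sum.
-/

namespace Matrix

variable {m n 𝕜 : Type*} [Fintype m] [Fintype n] [Field 𝕜] [StarRing 𝕜]

structure IsMoorePenroseInverse (A : Matrix m n 𝕜) (G : Matrix n m 𝕜) : Prop where
  mul_inv_mul : A * G * A = A
  inv_mul_inv : G * A * G = G
  isHermitian_mul_inv : (A * G).IsHermitian
  isHermitian_inv_mul : (G * A).IsHermitian

namespace IsMoorePenroseInverse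

variable {A : Matrix m n 𝕜} {G : Matrix n m 𝕜}

theorem conjTranspose (hG : A.IsMoorePenroseInverse G) : Aᴴ.IsMoorePenroseInverse Gᴴ where
  mul_inv_mul := by simp only [← conjTranspose_mul, ← Matrix.mul_assoc, hG.mul_inv_mul]
  inv_mul_inv := by simp only [← conjTranspose_mul, ← Matrix.mul_assoc, hG.inv_mul_inv]
  isHermitian_mul_inv := by
    rw [← conjTranspose_mul, hG.isHermitian_inv_mul.eq]; exact hG.isHermitian_inv_mul
  isHermitian_inv_mul := by
    rw [← conjTranspose_mul, hG.isHermitian_mul_inv.eq]; exact hG.isHermitian_mul_inv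

theorem inv_mul_mul_conjTranspose (hG : A.IsMoorePenroseInverse G) : G * A * Aᴴ = Aᴴ :=
  calc G * A * Aᴴ = (A * (G * A))ᴴ := by rw [conjTranspose_mul, hG.isHermitian_inv_mul.eq]
    _ = Aᴴ := by rw [← Matrix.mul_assoc, hG.mul_inv_mul]

theorem inv_mul_conjTranspose_mul_conjTranspose (hG : A.IsMoorePenroseInverse G) :
    G * Gᴴ * Aᴴ = G :=
  calc G * Gᴴ * Aᴴ = G * (A * G)ᴴ := by rw [conjTranspose_mul, Matrix.mul_assoc]
    _ = G := by rw [hG.isHermitian_mul_inv.eq, ← Matrix.mul_assoc, hG.inv_mul_inv]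

theorem mulVec_eq_inv_smul_of_isHermitian {A G : Matrix m m 𝕜}
    (hG : A.IsMoorePenroseInverse G) (hA : A.IsHermitian) {v : m → 𝕜} {μ : 𝕜}
    (hv : A *ᵥ v = μ • v) : G *ᵥ v = μ⁻¹ • v := by
  rcases eq_or_ne μ 0 with rfl | hμ
  · rw [← hG.inv_mul_conjTranspose_mul_conjTranspose, hA.eq, ← mulVec_mulVec, hv, zero_smul,
      mulVec_zero, _root_.inv_zero, zero_smul]
  · have h := congrArg (· *ᵥ v) hG.inv_mul_mul_conjTranspose
    simp only [hA.eq, ← mulVec_mulVec, hv, mulVec_smul, smul_smul] at h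
    refine smul_right_injective _ (mul_ne_zero hμ hμ) ?_
    dsimp only
    rw [h, smul_smul, mul_assoc, mul_inv_cancel₀ hμ, mul_one]

end IsMoorePenroseInverse

end Matrix

theorem Orthonormal.sum_sq_norm_inner_right {ι 𝕜 E : Type*} [Fintype ι] [RCLike 𝕜]
    [NormedAddCommGroup E] [InnerProductSpace 𝕜 E] [FiniteDimensional 𝕜 E] {v : ι → E}
    (hv : Orthonormal 𝕜 v) (card_eq : Fintype.card ι = Module.finrank 𝕜 E) (x : E) :
    ∑ i, ‖inner 𝕜 (v i) x‖ ^ 2 = ‖x‖ ^ 2 := by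
  have hsp := hv.linearIndependent.span_eq_top_of_card_eq_finrank' card_eq
  simpa using (OrthonormalBasis.mk hv hsp.ge).sum_sq_norm_inner_right x

theorem inner_toE_mulVec {n : ℕ} (M : Matrix (Fin n) (Fin n) ℂ) (x y : Fin n → ℂ) :
    ⟪toE x, toE (M *ᵥ y)⟫ = ⟪toE (Mᴴ *ᵥ x), toE y⟫ := by
  simp only [toE, WithLp.equiv_symm_apply, EuclideanSpace.inner_toLp_toLp]
  rw [star_mulVec, conjTranspose_conjTranspose, dotProduct_comm, dotProduct_mulVec,
    dotProduct_comm]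

theorem toE_smul {n : ℕ} (c : ℂ) (x : Fin n → ℂ) : toE (c • x) = c • toE x := rfl

theorem stmt_0_general (n : ℕ) [NeZero n]
    (H HI : Matrix (Fin n) (Fin n) ℂ)
    (hH : H.IsHermitian)
    (Ψ : Fin n → (Fin n → ℂ)) (E : Fin n → ℝ)
    (horth : Orthonormal ℂ (fun j => toE (Ψ j)))
    (heig : ∀ j, H.mulVec (Ψ j) = (E j : ℂ) • Ψ j)
    (A Gp : Matrix (Fin n) (Fin n) ℂ)
    (hA : A = H - (E 0 : ℂ) • 1)
    (h1 : A * Gp * A = A) (h2 : Gp * A * Gp = Gp)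
    (h3 : (A * Gp)ᴴ = A * Gp) (h4 : (Gp * A)ᴴ = Gp * A) :
    ∑ j ∈ Finset.univ.erase 0,
        ‖⟪toE (Ψ j), toE (HI.mulVec (Ψ 0))⟫‖ ^ 2 / (E j - E 0) ^ 2
      = ‖toE (Gp.mulVec (HI.mulVec (Ψ 0)))‖ ^ 2 := by
  have hAH : A.IsHermitian := hA ▸ hH.sub (isHermitian_one.smul (Complex.conj_ofReal _))
  have hG : A.IsMoorePenroseInverse Gp := ⟨h1, h2, h3, h4⟩
  have hGH : A.IsMoorePenroseInverse Gpᴴ := hAH.eq ▸ hG.conjTranspose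
  have hAΨ (j : Fin n) : A *ᵥ Ψ j = ((E j - E 0 : ℝ) : ℂ) • Ψ j := by
    rw [hA, sub_mulVec, heig, smul_mulVec, one_mulVec, Complex.ofReal_sub, sub_smul]
  have hcoef (j : Fin n) : ‖⟪toE (Ψ j), toE (Gp *ᵥ HI *ᵥ Ψ 0)⟫‖ ^ 2
      = ‖⟪toE (Ψ j), toE (HI *ᵥ Ψ 0)⟫‖ ^ 2 / (E j - E 0) ^ 2 := by
    rw [inner_toE_mulVec, hGH.mulVec_eq_inv_smul_of_isHermitian hAH (hAΨ j), toE_smul,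
      inner_smul_left, norm_mul, RCLike.norm_conj, norm_inv, Complex.norm_real, Real.norm_eq_abs,
      mul_pow, inv_pow, sq_abs, div_eq_inv_mul]
  -- the `j = 0` summand on the left is `‖·‖ ^ 2 / 0 = 0`
  rw [Finset.sum_erase _ (by simp), ← horth.sum_sq_norm_inner_right (by simp)]
  exact Finset.sum_congr rfl fun j _ => (hcoef j).symm

/-- For Hermitian `H, H_I` with orthonormal eigenbasis `Ψ` of `H`,
eigenvalues `E` with `E 0` the smallest and simple, and any matrix `Gp` satisfying the four
Moore–Penrose conditions with respect to `A = H - E 0 • 1`, the perturbative (Lehmann) sum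
for the fidelity susceptibility equals `‖Gp (H_I Ψ₀)‖₂²`. -/
theorem stmt_0 (n : ℕ) [NeZero n]
    (H HI : Matrix (Fin n) (Fin n) ℂ)
    (hH : H.IsHermitian) (hHI : HI.IsHermitian)
    (Ψ : Fin n → (Fin n → ℂ)) (E : Fin n → ℝ)
    (horth : Orthonormal ℂ (fun j => toE (Ψ j)))
    (heig : ∀ j, H.mulVec (Ψ j) = (E j : ℂ) • Ψ j)
    (hground : ∀ j, j ≠ 0 → E 0 < E j)
    (A Gp : Matrix (Fin n) (Fin n) ℂ)
    (hA : A = H - (E 0 : ℂ) • 1)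
    (h1 : A * Gp * A = A) (h2 : Gp * A * Gp = Gp)
    (h3 : (A * Gp)ᴴ = A * Gp) (h4 : (Gp * A)ᴴ = Gp * A) :
    ∑ j ∈ Finset.univ.erase 0,
        ‖⟪toE (Ψ j), toE (HI.mulVec (Ψ 0))⟫‖ ^ 2 / (E j - E 0) ^ 2
      = ‖toE (Gp.mulVec (HI.mulVec (Ψ 0)))‖ ^ 2 :=
  stmt_0_general n H HI hH Ψ E horth heig A Gp hA h1 h2 h3 h4
end

section
/- Let A be a positive semidefinite Hermitian n×n complex matrix with A ≠ 0, let α ≥ ‖A‖ (spectral norm), let η > 0 be the smallest nonzero eigenvalue of A, and set δ := η/α. Let p be an odd real polynomial such that |p(x) − (3/4)·(δ/x)| ≤ ε' for all real x with δ ≤ |x| ≤ 1. Then ‖(4/(3η)) · p(α^{-1} A) − A⁺‖ ≤ (4/(3η)) · ε', where p(α^{-1}A) is the evaluation of the polynomial p at the matrix α^{-1}A and A⁺ is the Moore–Penrose pseudoinverse of A. -/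
/-!
Both matrices are images of `A` under the continuous functional calculus: `A⁺` is `f(A)` for
`f x = x⁻¹` (with Mathlib's `0⁻¹ = 0`), since `f(A)` satisfies the Penrose equations and these
determine the pseudoinverse, and `p(α⁻¹ A)` is `g(A)` for `g x = p(x / α)`. Hence the difference
is `h(A)` with `h = (4/(3η)) g - f`, whose norm is bounded by `sup |h|` over the spectrum, which
lies in `{0} ∪ [η, α]`. At `0` both terms vanish (`p` is odd), and on `[η, α]` we have
`h x = (4/(3η)) (p(x/α) - (3/4) δ / (x/α))`.
-/

open Matrix
open scoped Matrix.Norms.L2Operator ComplexOrder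

structure IsMoorePenroseInverse {R : Type*} [Mul R] [Star R] (a b : R) : Prop where
  mul_mul_self : a * b * a = a
  mul_mul_inv : b * a * b = b
  isSelfAdjoint_mul_left : IsSelfAdjoint (a * b)
  isSelfAdjoint_mul_right : IsSelfAdjoint (b * a)

namespace IsMoorePenroseInverse

variable {R : Type*} [Semigroup R] [StarMul R] {a b c : R}

theorem mul_left_eq (hb : IsMoorePenroseInverse a b) (hc : IsMoorePenroseInverse a c) :
    a * b = a * c :=
  calc a * b = a * c * a * b := by rw [hc.mul_mul_self]
    _ = star (a * c) * star (a * b) := by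
        rw [hc.isSelfAdjoint_mul_left.star_eq, hb.isSelfAdjoint_mul_left.star_eq, mul_assoc]
    _ = star (a * b * a * c) := by rw [← star_mul, mul_assoc, mul_assoc, mul_assoc]
    _ = a * c := by rw [hb.mul_mul_self, hc.isSelfAdjoint_mul_left.star_eq]

theorem mul_right_eq (hb : IsMoorePenroseInverse a b) (hc : IsMoorePenroseInverse a c) :
    b * a = c * a :=
  calc b * a = b * (a * c * a) := by rw [hc.mul_mul_self]
    _ = star (b * a) * star (c * a) := by
        rw [hc.isSelfAdjoint_mul_right.star_eq, hb.isSelfAdjoint_mul_right.star_eq]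
        simp only [mul_assoc]
    _ = star (c * (a * b * a)) := by rw [← star_mul]; simp only [mul_assoc]
    _ = c * a := by rw [hb.mul_mul_self, hc.isSelfAdjoint_mul_right.star_eq]

theorem unique (hb : IsMoorePenroseInverse a b) (hc : IsMoorePenroseInverse a c) : b = c :=
  calc b = b * (a * b) := by rw [← mul_assoc, hb.mul_mul_inv]
    _ = c * a * c := by rw [hb.mul_left_eq hc, ← mul_assoc, hb.mul_right_eq hc]
    _ = c := hc.mul_mul_inv

end IsMoorePenroseInverse

theorem IsSelfAdjoint.isMoorePenroseInverse_cfc_inv {A : Type*} [TopologicalSpace A] [Ring A]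
    [StarRing A] [Algebra ℝ A] [ContinuousFunctionalCalculus ℝ A IsSelfAdjoint] {a : A}
    (ha : IsSelfAdjoint a) (hinv : ContinuousOn (·⁻¹) (spectrum ℝ a)) :
    IsMoorePenroseInverse a (cfc (·⁻¹ : ℝ → ℝ) a) := by
  have hid : cfc (fun x : ℝ => x) a = a := cfc_id' ℝ a
  have hmul_left : ∀ f : ℝ → ℝ, ContinuousOn f (spectrum ℝ a) →
      a * cfc f a = cfc (fun x => x * f x) a :=
    fun f hf => by rw [cfc_mul (fun x => x) f a (continuousOn_id' _) hf, hid]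
  have hmul_right : ∀ f : ℝ → ℝ, ContinuousOn f (spectrum ℝ a) →
      cfc f a * a = cfc (fun x => f x * x) a :=
    fun f hf => by rw [cfc_mul f (fun x => x) a hf (continuousOn_id' _), hid]
  refine ⟨?_, ?_, ?_, ?_⟩
  · rw [hmul_left _ hinv, hmul_right _ (by fun_prop)]
    simp only [mul_inv_mul_cancel, hid]
  · rw [hmul_right _ hinv, ← cfc_mul _ _ a (by fun_prop) hinv]
    congr! 2 with x
    simpa using mul_inv_mul_cancel x⁻¹
  · rw [hmul_left _ hinv]
    exact cfc_predicate _ a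
  · rw [hmul_right _ hinv]
    exact cfc_predicate _ a

theorem Matrix.mem_spectrum_iff_exists_mulVec_eq_smul {R K n : Type*} [CommSemiring R] [Field K]
    [Algebra R K] [Fintype n] [DecidableEq n] (A : Matrix n n K) (r : R) :
    r ∈ spectrum R A ↔ ∃ v ≠ 0, A *ᵥ v = algebraMap R K r • v := by
  rw [← spectrum.algebraMap_mem_iff K, ← Matrix.spectrum_toLin',
    ← Module.End.hasEigenvalue_iff_mem_spectrum]
  constructor
  · intro h
    obtain ⟨v, hv⟩ := h.exists_hasEigenvector
    exact ⟨v, hv.2, by rw [← Matrix.toLin'_apply]; exact Module.End.mem_eigenspace_iff.1 hv.1⟩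
  · rintro ⟨v, hv0, hv⟩
    exact Module.End.hasEigenvalue_of_hasEigenvector
      ⟨Module.End.mem_eigenspace_iff.2 (by rwa [Matrix.toLin'_apply]), hv0⟩

theorem abs_mul_eval_mul_sub_inv_le {p : Polynomial ℝ} {η α ε x : ℝ} (hη : 0 < η) (hηx : η ≤ x)
    (hxα : x ≤ α)
    (happrox : ∀ y : ℝ, η / α ≤ |y| → |y| ≤ 1 → |p.eval y - 3 / 4 * ((η / α) / y)| ≤ ε) :
    |4 / (3 * η) * p.eval (α⁻¹ * x) - x⁻¹| ≤ 4 / (3 * η) * ε := by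
  have hx : 0 < x := hη.trans_le hηx
  have hα : 0 < α := hx.trans_le hxα
  have hy : |α⁻¹ * x| = x / α := by rw [abs_of_pos (by positivity), inv_mul_eq_div]
  have hrw : 4 / (3 * η) * p.eval (α⁻¹ * x) - x⁻¹
      = 4 / (3 * η) * (p.eval (α⁻¹ * x) - 3 / 4 * ((η / α) / (α⁻¹ * x))) := by
    field_simp
  rw [hrw, abs_mul, abs_of_pos (by positivity)]
  gcongr
  apply happrox
  · rw [hy]; gcongr
  · rwa [hy, div_le_one hα]

theorem CStarAlgebra.le_norm_of_mem_spectrum {A : Type*} [CStarAlgebra A] {a : A} {x : ℝ}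
    (hx : x ∈ spectrum ℝ a) : x ≤ ‖a‖ := by
  obtain h | h := subsingleton_or_nontrivial A
  · rw [spectrum.of_subsingleton] at hx
    exact hx.elim
  · exact (Real.le_norm_self x).trans (spectrum.norm_le_norm_of_mem hx)

theorem stmt_4_general (n : ℕ)
    (A : Matrix (Fin n) (Fin n) ℂ) (hA : A.PosSemidef)
    (α : ℝ) (hα : ‖A‖ ≤ α)
    (η : ℝ) (hη : 0 < η)
    (hev : ∃ v : Fin n → ℂ, v ≠ 0 ∧ A.mulVec v = (η : ℂ) • v)
    (hmin : ∀ (μ : ℝ) (v : Fin n → ℂ), v ≠ 0 → A.mulVec v = (μ : ℂ) • v → μ = 0 ∨ η ≤ μ)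
    (ε' : ℝ) (p : Polynomial ℝ)
    (hodd : ∀ x : ℝ, p.eval (-x) = - p.eval x)
    (happrox : ∀ x : ℝ, η / α ≤ |x| → |x| ≤ 1 →
      |p.eval x - 3 / 4 * ((η / α) / x)| ≤ ε')
    (Ap : Matrix (Fin n) (Fin n) ℂ)
    (h1 : A * Ap * A = A) (h2 : Ap * A * Ap = Ap)
    (h3 : (A * Ap)ᴴ = A * Ap) (h4 : (Ap * A)ᴴ = Ap * A) :
    ‖(4 / (3 * η)) • (Polynomial.aeval (α⁻¹ • A) p : Matrix (Fin n) (Fin n) ℂ) - Ap‖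
      ≤ (4 / (3 * η)) * ε' := by
  have hA_sa : IsSelfAdjoint A := hA.isHermitian
  have hcont : ∀ f : ℝ → ℝ, ContinuousOn f (spectrum ℝ A) :=
    (hA.isHermitian.spectrum_real_eq_range_eigenvalues ▸ Set.finite_range _).continuousOn
  have hle_norm : ∀ x ∈ spectrum ℝ A, x ≤ α := fun x hx =>
    (CStarAlgebra.le_norm_of_mem_spectrum hx).trans hα
  have hspec : ∀ x ∈ spectrum ℝ A, x = 0 ∨ η ≤ x ∧ x ≤ α := by
    intro x hx
    obtain ⟨v, hv0, hv⟩ := (mem_spectrum_iff_exists_mulVec_eq_smul A x).1 hx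
    exact (hmin x v hv0 hv).imp_right fun h => ⟨h, hle_norm x hx⟩
  have hηα : η ≤ α := hle_norm η ((mem_spectrum_iff_exists_mulVec_eq_smul A η).2 hev)
  have hδ : |η / α| = η / α := abs_of_pos (div_pos hη (hη.trans_le hηα))
  have hε' : 0 ≤ ε' := (abs_nonneg _).trans <|
    happrox (η / α) hδ.ge (hδ.trans_le ((div_le_one (hη.trans_le hηα)).2 hηα))
  have hp0 : p.eval 0 = 0 := by linarith [neg_zero (G := ℝ) ▸ hodd 0]
  have hAp : Ap = cfc (·⁻¹ : ℝ → ℝ) A :=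
    IsMoorePenroseInverse.unique ⟨h1, h2, h3, h4⟩ (hA_sa.isMoorePenroseInverse_cfc_inv (hcont _))
  have hpoly : Polynomial.aeval (α⁻¹ • A) p = cfc (fun x => p.eval (α⁻¹ * x)) A := by
    rw [← cfc_polynomial p (α⁻¹ • A), ← cfc_comp_smul α⁻¹ (p.eval ·) A]
    rfl
  rw [hAp, hpoly, ← cfc_smul _ _ A (hcont _), ← cfc_sub _ _ A (hcont _) (hcont _)]
  refine norm_cfc_le (by positivity) fun x hx => ?_
  rcases hspec x hx with rfl | ⟨hηx, hxα⟩
  · simp [hp0]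
    positivity
  · exact abs_mul_eval_mul_sub_inv_le hη hηx hxα happrox

/-- If `A ≠ 0` is positive semidefinite with `α ≥ ‖A‖`, smallest nonzero
eigenvalue `η > 0`, and the odd real polynomial `p` satisfies
`|p(x) − (3/4)·(δ/x)| ≤ ε'` for `δ := η/α ≤ |x| ≤ 1`, then
`‖(4/(3η)) p(α⁻¹ A) − A⁺‖ ≤ (4/(3η)) ε'` for the Moore–Penrose pseudoinverse `A⁺` of `A`
(characterized by the four Penrose conditions). -/
theorem stmt_4 (n : ℕ)
    (A : Matrix (Fin n) (Fin n) ℂ) (hA : A.PosSemidef) (hA0 : A ≠ 0)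
    (α : ℝ) (hα : ‖A‖ ≤ α)
    (η : ℝ) (hη : 0 < η)
    (hev : ∃ v : Fin n → ℂ, v ≠ 0 ∧ A.mulVec v = (η : ℂ) • v)
    (hmin : ∀ (μ : ℝ) (v : Fin n → ℂ), v ≠ 0 → A.mulVec v = (μ : ℂ) • v → μ = 0 ∨ η ≤ μ)
    (ε' : ℝ) (p : Polynomial ℝ)
    (hodd : ∀ x : ℝ, p.eval (-x) = - p.eval x)
    (happrox : ∀ x : ℝ, η / α ≤ |x| → |x| ≤ 1 →
      |p.eval x - 3 / 4 * ((η / α) / x)| ≤ ε')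
    (Ap : Matrix (Fin n) (Fin n) ℂ)
    (h1 : A * Ap * A = A) (h2 : Ap * A * Ap = Ap)
    (h3 : (A * Ap)ᴴ = A * Ap) (h4 : (Ap * A)ᴴ = Ap * A) :
    ‖(4 / (3 * η)) • (Polynomial.aeval (α⁻¹ • A) p : Matrix (Fin n) (Fin n) ℂ) - Ap‖
      ≤ (4 / (3 * η)) * ε' :=
  stmt_4_general n A hA α hα η hη hev hmin ε' p hodd happrox Ap h1 h2 h3 h4
end

section
/- Let H and O be Hermitian n×n complex matrices. Suppose H has an orthonormal eigenbasis Ψ_0, …, Ψ_{n−1} with H Ψ_j = E_j Ψ_j, where E_0 is the smallest eigenvalue and is simple. Let ψ : ℝ → ℂⁿ and E : ℝ → ℝ be differentiable at 0 with ψ(0) = Ψ_0, ‖ψ(h)‖₂ = 1 for all h, and (H − h O) ψ(h) = E(h) ψ(h) for all h in a neighborhood of 0. Then the function h ↦ ⟨ψ(h), O ψ(h)⟩ is differentiable at 0 with derivative (d/dh)⟨ψ(h), O ψ(h)⟩|_{h=0} = 2 ∑_{j ≠ 0} |⟨Ψ_j, O Ψ_0⟩|² / (E_j − E_0). -/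
/-!
Differentiating the eigenvalue equation `(H - h O) ψ(h) = E(h) ψ(h)` at `h = 0` gives
`H ψ'(0) - O Ψ₀ = E'(0) Ψ₀ + E₀ ψ'(0)`; pairing with `Ψⱼ` for `j ≠ 0` yields the first-order
coefficients `⟪Ψⱼ, ψ'(0)⟫ = ⟪Ψⱼ, O Ψ₀⟫ / (Eⱼ - E₀)`. The derivative of `⟪ψ, O ψ⟫` at `0` is
`2 Re ⟪O Ψ₀, ψ'(0)⟫`. Expanding it in the eigenbasis, the `j = 0` term drops out: `⟪O Ψ₀, Ψ₀⟫` is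
real, while `‖ψ(h)‖ = 1` makes `⟪Ψ₀, ψ'(0)⟫` purely imaginary.
-/

open Matrix
open scoped ComplexInnerProductSpace

open Filter Topology Finset

section

variable {V : Type*} [NormedAddCommGroup V] [InnerProductSpace ℂ V]

theorem LinearMap.hasDerivAt_apply_comp [FiniteDimensional ℂ V] (T : V →ₗ[ℂ] V) {φ : ℝ → V}
    {v : V} {t : ℝ} (hφ : HasDerivAt φ v t) : HasDerivAt (fun s => T (φ s)) (T v) t :=
  ((LinearMap.toContinuousLinearMap T).restrictScalars ℝ).hasFDerivAt.comp_hasDerivAt t hφ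

theorem re_inner_eq_zero_of_hasDerivAt_of_norm_eq_one {φ : ℝ → V} {v : V} {t : ℝ}
    (hφ : HasDerivAt φ v t) (hnorm : ∀ᶠ s in 𝓝 t, ‖φ s‖ = 1) : (⟪φ t, v⟫).re = 0 := by
  have hconst : HasDerivAt (fun s => ⟪φ s, φ s⟫) 0 t := by
    refine (hasDerivAt_const t (1 : ℂ)).congr_of_eventuallyEq ?_
    filter_upwards [hnorm] with s hs
    rw [inner_self_eq_norm_sq_to_K, hs]
    norm_num
  have h := (hφ.inner ℂ hφ).unique hconst
  rw [← inner_conj_symm v (φ t), Complex.add_conj, Complex.ofReal_eq_zero] at h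
  linarith

theorem hasDerivAt_inner_apply_self [FiniteDimensional ℂ V] {A : V →ₗ[ℂ] V} (hA : A.IsSymmetric)
    {φ : ℝ → V} {v : V} {t : ℝ} (hφ : HasDerivAt φ v t) :
    HasDerivAt (fun s => ⟪φ s, A (φ s)⟫) ((2 * (⟪A (φ t), v⟫).re : ℝ) : ℂ) t := by
  refine (hφ.inner ℂ (A.hasDerivAt_apply_comp hφ)).congr_deriv ?_
  rw [← hA, ← inner_conj_symm v, Complex.add_conj]

theorem eigen_equation_deriv [FiniteDimensional ℂ V] {T A : V →ₗ[ℂ] V} {φ : ℝ → V} {e : ℝ → ℝ}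
    {v : V} {e' : ℝ} (hφ : HasDerivAt φ v 0) (he : HasDerivAt e e' 0)
    (heig : ∀ᶠ h : ℝ in 𝓝 0, (T - (h : ℂ) • A) (φ h) = (e h : ℂ) • φ h) :
    T v - A (φ 0) = (e' : ℂ) • φ 0 + (e 0 : ℂ) • v := by
  have hlhs : HasDerivAt (fun h : ℝ => (T - (h : ℂ) • A) (φ h)) (T v - A (φ 0)) 0 := by
    have hA : HasDerivAt (fun h : ℝ => (h : ℂ) • A (φ h)) (A (φ 0)) 0 :=
      (Complex.ofRealCLM.hasDerivAt.smul (A.hasDerivAt_apply_comp hφ)).congr_deriv (by simp)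
    exact (T.hasDerivAt_apply_comp hφ).sub hA
  have hrhs := (Complex.ofRealCLM.hasFDerivAt.comp_hasDerivAt 0 he).smul hφ
  simp only [Function.comp_def, Complex.ofRealCLM_apply] at hrhs
  rw [hlhs.unique (hrhs.congr_of_eventuallyEq heig), add_comm]

theorem inner_eq_div_of_first_order_eq {T : V →ₗ[ℂ] V} (hT : T.IsSymmetric) {u v w x : V}
    {μ ν : ℝ} {c : ℂ} (hu : T u = (μ : ℂ) • u) (huw : ⟪u, w⟫ = 0) (hμν : μ ≠ ν)
    (h : T v - x = c • w + (ν : ℂ) • v) : ⟪u, v⟫ = ⟪u, x⟫ / (μ - ν) := by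
  have hsub : (μ : ℂ) - ν ≠ 0 := sub_ne_zero.2 (Complex.ofReal_injective.ne hμν)
  have h' := congrArg (fun y => ⟪u, y⟫) h
  simp only [inner_sub_right, inner_add_right, inner_smul_right, huw, ← hT u v, hu,
    inner_smul_left, Complex.conj_ofReal] at h'
  rw [eq_div_iff hsub]
  linear_combination h'

theorem re_inner_eq_sum_erase {ι : Type*} [Fintype ι] [DecidableEq ι]
    (b : OrthonormalBasis ι ℂ V) (x v : V) {i : ι} (hx : (⟪x, b i⟫).im = 0)
    (hv : (⟪b i, v⟫).re = 0) :
    (⟪x, v⟫).re = ∑ j ∈ univ.erase i, (⟪x, b j⟫ * ⟪b j, v⟫).re := by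
  rw [← b.sum_inner_mul_inner, Complex.re_sum, ← add_sum_erase _ _ (mem_univ i),
    Complex.mul_re, hx, hv, mul_zero, zero_mul, sub_zero, zero_add]

theorem hasDerivAt_inner_apply_eigenvector_curve [FiniteDimensional ℂ V] {ι : Type*} [Fintype ι]
    [DecidableEq ι] {T A : V →ₗ[ℂ] V} (hT : T.IsSymmetric) (hA : A.IsSymmetric)
    (b : OrthonormalBasis ι ℂ V) (E : ι → ℝ) (hb : ∀ j, T (b j) = (E j : ℂ) • b j) {i : ι}
    (hE : ∀ j ≠ i, E j ≠ E i) {φ : ℝ → V} {e : ℝ → ℝ} (hφ0 : φ 0 = b i)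
    (hφ : DifferentiableAt ℝ φ 0) (he : DifferentiableAt ℝ e 0)
    (hnorm : ∀ᶠ h in 𝓝 0, ‖φ h‖ = 1)
    (heig : ∀ᶠ h : ℝ in 𝓝 0, (T - (h : ℂ) • A) (φ h) = (e h : ℂ) • φ h) :
    HasDerivAt (fun h => ⟪φ h, A (φ h)⟫)
      ((2 * ∑ j ∈ univ.erase i, ‖⟪b j, A (b i)⟫‖ ^ 2 / (E j - E i) : ℝ) : ℂ) 0 := by
  have he0 : e 0 = E i := by
    have h0 := heig.self_of_nhds
    simp only [Complex.ofReal_zero, zero_smul, sub_zero, hφ0, hb] at h0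
    exact_mod_cast (smul_left_injective ℂ (b.orthonormal.ne_zero i) h0).symm
  have hv := hφ.hasDerivAt
  have hfirst := eigen_equation_deriv hv he.hasDerivAt heig
  rw [hφ0, he0] at hfirst
  have hcoef : ∀ j ≠ i, ⟪b j, deriv φ 0⟫ = ⟪b j, A (b i)⟫ / (E j - E i) := fun j hj =>
    inner_eq_div_of_first_order_eq hT (hb j) (b.inner_eq_zero hj) (hE j hj) hfirst
  have hAii : (⟪A (b i), b i⟫).im = 0 := by
    rw [← Complex.conj_eq_iff_im, inner_conj_symm, hA]
  have hre := re_inner_eq_zero_of_hasDerivAt_of_norm_eq_one hv hnorm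
  rw [hφ0] at hre
  refine (hasDerivAt_inner_apply_self hA hv).congr_deriv ?_
  rw [hφ0, re_inner_eq_sum_erase b _ _ hAii hre]
  congr 2
  refine sum_congr rfl fun j hj => ?_
  rw [hcoef j (ne_of_mem_erase hj), ← inner_conj_symm, mul_div_assoc', mul_comm,
    Complex.mul_conj, Complex.normSq_eq_norm_sq, ← Complex.ofReal_sub,
    ← Complex.ofReal_div, Complex.ofReal_re]

end

theorem toE_mulVec {n : ℕ} (M : Matrix (Fin n) (Fin n) ℂ) (x : Fin n → ℂ) :
    toE (M *ᵥ x) = toEuclideanLin M (toE x) := rfl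

theorem HasDerivAt.toE {n : ℕ} {f : ℝ → Fin n → ℂ} {f' : Fin n → ℂ} {t : ℝ}
    (hf : HasDerivAt f f' t) : HasDerivAt (fun s => toE (f s)) (toE f') t :=
  ((PiLp.continuousLinearEquiv 2 ℝ (fun _ : Fin n => ℂ)).symm.hasFDerivAt.comp_hasDerivAt t hf)

/-- Zero-temperature Lehmann representation of the linear static
susceptibility: for Hermitian `H, O`, an orthonormal eigenbasis `Ψ` of `H` with eigenvalues
`E`, `E 0` smallest and simple, and a normalized eigenvector family `ψ(h)` of `H − h O`
with eigenvalue `E(h)`, differentiable at `0` with `ψ(0) = Ψ₀`, the function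
`h ↦ ⟨ψ(h), O ψ(h)⟩` has derivative `2 ∑_{j ≠ 0} |⟨Ψ_j, O Ψ₀⟩|²/(E_j − E_0)` at `h = 0`. -/
theorem stmt_11 (n : ℕ) [NeZero n]
    (H O : Matrix (Fin n) (Fin n) ℂ)
    (hH : H.IsHermitian) (hO : O.IsHermitian)
    (Ψ : Fin n → (Fin n → ℂ)) (E : Fin n → ℝ)
    (horth : Orthonormal ℂ (fun j => toE (Ψ j)))
    (heig : ∀ j, H.mulVec (Ψ j) = (E j : ℂ) • Ψ j)
    (hground : ∀ j, j ≠ 0 → E 0 < E j)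
    (ψ : ℝ → (Fin n → ℂ)) (En : ℝ → ℝ)
    (hψ0 : ψ 0 = Ψ 0)
    (hψdiff : DifferentiableAt ℝ ψ 0)
    (hEdiff : DifferentiableAt ℝ En 0)
    (hnorm : ∀ h : ℝ, ‖toE (ψ h)‖ = 1)
    (heig' : ∀ᶠ h in nhds (0 : ℝ),
      (H - h • O).mulVec (ψ h) = ((En h : ℝ) : ℂ) • ψ h) :
    HasDerivAt (fun h : ℝ => ⟪toE (ψ h), toE (O.mulVec (ψ h))⟫)
      (((2 * ∑ j ∈ Finset.univ.erase 0,
          ‖⟪toE (Ψ j), toE (O.mulVec (Ψ 0))⟫‖ ^ 2 / (E j - E 0) : ℝ) : ℂ)) 0 := by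
  obtain ⟨b, hb⟩ : ∃ b : OrthonormalBasis (Fin n) ℂ (EuclideanSpace ℂ (Fin n)),
      ∀ j, b j = toE (Ψ j) :=
    ⟨(basisOfOrthonormalOfCardEqFinrank horth (by simp)).toOrthonormalBasis (by simpa using horth),
      by simp⟩
  have hpert : ∀ᶠ h : ℝ in 𝓝 0, (toEuclideanLin H - (h : ℂ) • toEuclideanLin O) (toE (ψ h)) =
      (En h : ℂ) • toE (ψ h) := heig'.mono fun h hh => by
    rw [← map_smul, ← map_sub, Complex.coe_smul]
    exact congrArg toE hh
  simpa only [hb, toE_mulVec] using hasDerivAt_inner_apply_eigenvector_curve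
    (isSymmetric_toEuclideanLin_iff.2 hH) (isSymmetric_toEuclideanLin_iff.2 hO) b E
    (fun j => by rw [hb]; exact congrArg toE (heig j)) (fun j hj => (hground j hj).ne')
    (hψ0 ▸ hb 0).symm hψdiff.hasDerivAt.toE.differentiableAt hEdiff (.of_forall hnorm) hpert
end

section
/- Let H and H_I be Hermitian n×n complex matrices. Suppose H has an orthonormal eigenbasis Ψ_0, …, Ψ_{n−1} with H Ψ_j = E_j Ψ_j, where E_0 is the smallest eigenvalue and is simple. Let ψ : ℝ → ℂⁿ and E : ℝ → ℝ be differentiable at 0 with ψ(0) = Ψ_0, ‖ψ(ε)‖₂ = 1 for all ε, and (H + ε H_I) ψ(ε) = E(ε) ψ(ε) for all ε in a neighborhood of 0. Then ‖ψ'(0)‖₂² − |⟨Ψ_0, ψ'(0)⟩|² = ∑_{j ≠ 0} |⟨Ψ_j, H_I Ψ_0⟩|² / (E_j − E_0)². -/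
/-!
Differentiating the eigenvalue equation `(H + ε H_I) ψ(ε) = E(ε) ψ(ε)` at `ε = 0` gives
`H ψ' + H_I Ψ₀ = E₀ ψ' + E'(0) Ψ₀`. Taking the inner product with `Ψ_j`, `j ≠ 0`, and using that
`H` is Hermitian and `Ψ_j ⊥ Ψ₀`, yields `(E₀ - E_j) ⟨Ψ_j, ψ'⟩ = ⟨Ψ_j, H_I Ψ₀⟩`. Parseval's identity
in the eigenbasis writes `‖ψ'‖² - |⟨Ψ₀, ψ'⟩|²` as `∑_{j ≠ 0} |⟨Ψ_j, ψ'⟩|²`.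
-/

open Matrix
open scoped ComplexInnerProductSpace

open Filter Topology Finset
open scoped InnerProductSpace

theorem HasDerivAt.matrix_mulVec {𝕜 m n : Type*} [RCLike 𝕜] [Fintype m] [Fintype n]
    (A : Matrix m n 𝕜) {ψ : ℝ → n → 𝕜} {ψ' : n → 𝕜} {x : ℝ} (h : HasDerivAt ψ ψ' x) :
    HasDerivAt (fun ε => A *ᵥ ψ ε) (A *ᵥ ψ') x := by
  let L : (n → 𝕜) →L[ℝ] (m → 𝕜) := (A.mulVecLin.restrictScalars ℝ).toContinuousLinearMap
  exact L.hasFDerivAt.comp_hasDerivAt x h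

theorem Matrix.mulVec_add_mulVec_eq_of_hasDerivAt_eigen {n : Type*} [Fintype n]
    {H V : Matrix n n ℂ} {ψ : ℝ → n → ℂ} {ψ' : n → ℂ} {e : ℝ → ℝ} {e' : ℝ}
    (hψ : HasDerivAt ψ ψ' 0) (he : HasDerivAt e e' 0)
    (heig : ∀ᶠ ε in 𝓝 0, (H + ε • V) *ᵥ ψ ε = (e ε : ℂ) • ψ ε) :
    H *ᵥ ψ' + V *ᵥ ψ 0 = (e 0 : ℂ) • ψ' + (e' : ℂ) • ψ 0 := by
  have hlhs : HasDerivAt (fun ε : ℝ => (H + ε • V) *ᵥ ψ ε) (H *ᵥ ψ' + V *ᵥ ψ 0) 0 := by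
    have := (hψ.matrix_mulVec H).add ((hasDerivAt_id (0 : ℝ)).smul (hψ.matrix_mulVec V))
    simp only [id, zero_smul, one_smul, zero_add] at this
    refine this.congr_of_eventuallyEq (Eventually.of_forall fun ε => ?_)
    simp [add_mulVec, smul_mulVec]
  exact hlhs.unique ((he.ofReal_comp.smul hψ).congr_of_eventuallyEq heig)

theorem LinearMap.IsSymmetric.norm_sq_inner_eigenvector_eq
    {𝕜 V : Type*} [RCLike 𝕜] [NormedAddCommGroup V] [InnerProductSpace 𝕜 V]
    {T : V →ₗ[𝕜] V} (hT : T.IsSymmetric) {u v w d : V} {e μ : ℝ} {c : 𝕜}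
    (hw : T w = (μ : 𝕜) • w) (hwu : ⟪w, u⟫_𝕜 = 0) (heμ : e ≠ μ)
    (h : T d + v = (e : 𝕜) • d + c • u) :
    ‖⟪w, d⟫_𝕜‖ ^ 2 = ‖⟪w, v⟫_𝕜‖ ^ 2 / (μ - e) ^ 2 := by
  have hcoeff : ((e : 𝕜) - μ) * ⟪w, d⟫_𝕜 = ⟪w, v⟫_𝕜 := by
    have := congrArg (fun x => ⟪w, x⟫_𝕜) h
    simp only [inner_add_right, inner_smul_right, hwu, mul_zero, add_zero, ← hT w d, hw,
      inner_smul_left, RCLike.conj_ofReal] at this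
    linear_combination -this
  rw [eq_div_iff (pow_ne_zero 2 (sub_ne_zero.2 heμ.symm)), ← hcoeff, norm_mul, mul_pow,
    ← RCLike.ofReal_sub, RCLike.norm_ofReal, sq_abs]
  ring

theorem Orthonormal.norm_sq_sub_norm_sq_inner_eq_sum_erase
    {𝕜 V ι : Type*} [RCLike 𝕜] [NormedAddCommGroup V] [InnerProductSpace 𝕜 V]
    [FiniteDimensional 𝕜 V] [Fintype ι] [DecidableEq ι] {v : ι → V} (hv : Orthonormal 𝕜 v)
    (hcard : Fintype.card ι = Module.finrank 𝕜 V) (i : ι) (x : V) :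
    ‖x‖ ^ 2 - ‖⟪v i, x⟫_𝕜‖ ^ 2 = ∑ j ∈ univ.erase i, ‖⟪v j, x⟫_𝕜‖ ^ 2 := by
  have : Nonempty ι := ⟨i⟩
  let b := (basisOfOrthonormalOfCardEqFinrank hv hcard).toOrthonormalBasis
    (by rwa [coe_basisOfOrthonormalOfCardEqFinrank])
  have hb : ⇑b = v := by
    simp [b, Module.Basis.coe_toOrthonormalBasis, coe_basisOfOrthonormalOfCardEqFinrank]
  rw [← b.sum_sq_norm_inner_right, hb, ← add_sum_erase _ _ (mem_univ i)]
  ring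

theorem stmt_12_general (n : ℕ) [NeZero n]
    (H HI : Matrix (Fin n) (Fin n) ℂ)
    (hH : H.IsHermitian)
    (Ψ : Fin n → (Fin n → ℂ)) (E : Fin n → ℝ)
    (horth : Orthonormal ℂ (fun j => toE (Ψ j)))
    (heig : ∀ j, H.mulVec (Ψ j) = (E j : ℂ) • Ψ j)
    (hground : ∀ j, j ≠ 0 → E 0 < E j)
    (ψ : ℝ → (Fin n → ℂ)) (En : ℝ → ℝ) (ψ' : Fin n → ℂ)
    (hψ0 : ψ 0 = Ψ 0)
    (hψderiv : HasDerivAt ψ ψ' 0)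
    (hEdiff : DifferentiableAt ℝ En 0)
    (heig' : ∀ᶠ ε in nhds (0 : ℝ),
      (H + ε • HI).mulVec (ψ ε) = ((En ε : ℝ) : ℂ) • ψ ε) :
    ‖toE ψ'‖ ^ 2 - ‖⟪toE (Ψ 0), toE ψ'⟫‖ ^ 2
      = ∑ j ∈ Finset.univ.erase 0,
          ‖⟪toE (Ψ j), toE (HI.mulVec (Ψ 0))⟫‖ ^ 2 / (E j - E 0) ^ 2 := by
  have hEn0 : En 0 = E 0 := by
    have hΨ0 : Ψ 0 ≠ 0 := fun h => horth.ne_zero 0 (by simp [toE, h])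
    have h0 := heig'.self_of_nhds
    rw [zero_smul, add_zero, hψ0, heig 0] at h0
    exact_mod_cast smul_left_injective ℂ hΨ0 h0.symm
  have hfirst := mulVec_add_mulVec_eq_of_hasDerivAt_eigen hψderiv hEdiff.hasDerivAt heig'
  rw [hψ0, hEn0] at hfirst
  rw [horth.norm_sq_sub_norm_sq_inner_eq_sum_erase (by simp) 0]
  refine sum_congr rfl fun j hj => ?_
  have hj0 := ne_of_mem_erase hj
  exact (isSymmetric_toEuclideanLin_iff.mpr hH).norm_sq_inner_eigenvector_eq
    (congrArg toE (heig j)) (horth.2 hj0) (hground j hj0).ne (congrArg toE hfirst)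

/-- Geometric formula for the fidelity susceptibility: for Hermitian
`H, H_I`, an orthonormal eigenbasis `Ψ` of `H` with eigenvalues `E`, `E 0` smallest and
simple, and a normalized eigenvector family `ψ(ε)` of `H + ε H_I` with eigenvalue `E(ε)`,
differentiable at `0` with `ψ(0) = Ψ₀` and derivative `ψ'`,
`‖ψ'(0)‖² − |⟨Ψ₀, ψ'(0)⟩|² = ∑_{j ≠ 0} |⟨Ψ_j, H_I Ψ₀⟩|²/(E_j − E_0)²`. -/
theorem stmt_12 (n : ℕ) [NeZero n]
    (H HI : Matrix (Fin n) (Fin n) ℂ)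
    (hH : H.IsHermitian) (hHI : HI.IsHermitian)
    (Ψ : Fin n → (Fin n → ℂ)) (E : Fin n → ℝ)
    (horth : Orthonormal ℂ (fun j => toE (Ψ j)))
    (heig : ∀ j, H.mulVec (Ψ j) = (E j : ℂ) • Ψ j)
    (hground : ∀ j, j ≠ 0 → E 0 < E j)
    (ψ : ℝ → (Fin n → ℂ)) (En : ℝ → ℝ) (ψ' : Fin n → ℂ)
    (hψ0 : ψ 0 = Ψ 0)
    (hψderiv : HasDerivAt ψ ψ' 0)
    (hEdiff : DifferentiableAt ℝ En 0)
    (hnorm : ∀ ε : ℝ, ‖toE (ψ ε)‖ = 1)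
    (heig' : ∀ᶠ ε in nhds (0 : ℝ),
      (H + ε • HI).mulVec (ψ ε) = ((En ε : ℝ) : ℂ) • ψ ε) :
    ‖toE ψ'‖ ^ 2 - ‖⟪toE (Ψ 0), toE ψ'⟫‖ ^ 2
      = ∑ j ∈ Finset.univ.erase 0,
          ‖⟪toE (Ψ j), toE (HI.mulVec (Ψ 0))⟫‖ ^ 2 / (E j - E 0) ^ 2 :=
  stmt_12_general n H HI hH Ψ E horth heig hground ψ En ψ' hψ0 hψderiv hEdiff heig'
end

section
/- Let H and H_I be Hermitian n×n complex matrices. Suppose H has an orthonormal eigenbasis Ψ_0, …, Ψ_{n−1} with H Ψ_j = E_j Ψ_j, where E_0 is the smallest eigenvalue and is simple. Let ψ : ℝ → ℂⁿ and E : ℝ → ℝ be differentiable at 0 with ψ(0) = Ψ_0, ‖ψ(ε)‖₂ = 1 for all ε, and (H + ε H_I) ψ(ε) = E(ε) ψ(ε) for all ε in a neighborhood of 0. Let P⊥ := I − Ψ_0 Ψ_0* and let (H − E_0)⁺ := ∑_{j ≠ 0} (E_j − E_0)^{-1} Ψ_j Ψ_j*. Then P⊥ ψ'(0) = −(H − E_0)⁺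 H_I Ψ_0. -/
/-!
Differentiating `(H + ε H_I) ψ(ε) = E(ε) ψ(ε)` at `ε = 0`, and using `E(0) = E₀` (the eigenvalue
of the nonzero vector `Ψ₀` is unique), gives `(H - E₀) ψ'(0) = E'(0) Ψ₀ - H_I Ψ₀`. The reduced
resolvent `(H - E₀)⁺` kills `Ψ₀`, and `(H - E₀)⁺ (H - E₀) = ∑_{j ≠ 0} Ψ_j Ψ_j* = P⊥` by completeness
of the orthonormal eigenbasis; applying it to both sides gives the formula.
-/

open Matrix
open scoped ComplexInnerProductSpace

open Finset Filter Topology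

theorem star_dotProduct_eq_ite_of_orthonormal {ι : Type*} [DecidableEq ι] {n : ℕ}
    {Ψ : ι → Fin n → ℂ} (h : Orthonormal ℂ (fun j => toE (Ψ j))) (j k : ι) :
    star (Ψ j) ⬝ᵥ Ψ k = if j = k then 1 else 0 := by
  rw [dotProduct_comm, ← orthonormal_iff_ite.mp h j k]
  rfl

theorem sum_vecMulVec_star_self_eq_one {m R : Type*} [Fintype m] [DecidableEq m] [Field R]
    [StarRing R] {Ψ : m → m → R} (hΨ : ∀ j k, star (Ψ j) ⬝ᵥ Ψ k = if j = k then 1 else 0) :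
    ∑ j, vecMulVec (Ψ j) (star (Ψ j)) = 1 := by
  set U : Matrix m m R := (Matrix.of Ψ)ᵀ
  have hUU : Uᴴ * U = 1 := by
    ext j k
    simpa [U, Matrix.mul_apply, dotProduct, Matrix.one_apply] using hΨ j k
  calc ∑ j, vecMulVec (Ψ j) (star (Ψ j)) = U * Uᴴ := by
        ext i l
        simp [U, Matrix.mul_apply, vecMulVec_apply, Matrix.sum_apply]
    _ = 1 := mul_eq_one_comm.mp hUU

section RCLike

variable {m 𝕜 : Type*} [Fintype m] [RCLike 𝕜]

theorem HasDerivAt.const_mulVec {f : ℝ → m → 𝕜} {f' : m → 𝕜} {x : ℝ} (A : Matrix m m 𝕜)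
    (hf : HasDerivAt f f' x) : HasDerivAt (fun t => A *ᵥ f t) (A *ᵥ f') x :=
  ((Matrix.mulVecLin A).restrictScalars ℝ).toContinuousLinearMap.hasFDerivAt.comp_hasDerivAt x hf

theorem mulVec_add_mulVec_eq_of_eventually_eigen {H HI : Matrix m m 𝕜} {ψ : ℝ → m → 𝕜}
    {ψ' : m → 𝕜} {En : ℝ → ℝ} {En' x : ℝ} (hψ : HasDerivAt ψ ψ' x) (hEn : HasDerivAt En En' x)
    (heig : ∀ᶠ t in 𝓝 x, (H + t • HI) *ᵥ ψ t = (En t : 𝕜) • ψ t) :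
    (H + x • HI) *ᵥ ψ' + HI *ᵥ ψ x = (En' : 𝕜) • ψ x + (En x : 𝕜) • ψ' := by
  have hlhs : HasDerivAt (fun t => (H + t • HI) *ᵥ ψ t) ((H + x • HI) *ᵥ ψ' + HI *ᵥ ψ x) x := by
    have hsplit : (fun t : ℝ => (H + t • HI) *ᵥ ψ t) = fun t => H *ᵥ ψ t + t • HI *ᵥ ψ t := by
      funext t
      rw [add_mulVec, smul_mulVec]
    rw [hsplit, add_mulVec, smul_mulVec, add_assoc]
    have := (hψ.const_mulVec H).fun_add ((hasDerivAt_id' x).fun_smul (hψ.const_mulVec HI))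
    rwa [one_smul] at this
  have hrhs : HasDerivAt (fun t => (En t : 𝕜) • ψ t) ((En' : 𝕜) • ψ x + (En x : 𝕜) • ψ') x := by
    simp_rw [← RCLike.real_smul_eq_coe_smul (K := 𝕜)]
    rw [add_comm]
    exact hEn.smul hψ
  exact hlhs.unique (hrhs.congr_of_eventuallyEq heig)

theorem Matrix.IsHermitian.star_vecMul_eq_smul {H : Matrix m m 𝕜} (hH : H.IsHermitian)
    {v : m → 𝕜} {μ : ℝ} (h : H *ᵥ v = (μ : 𝕜) • v) : star v ᵥ* H = (μ : 𝕜) • star v := by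
  rw [← hH.eq, ← star_mulVec, h, star_smul, RCLike.star_def, RCLike.conj_ofReal]

variable [DecidableEq m]

/-- The pseudoinverse `(H - E i₀)⁺` of the paper, written on the eigenbasis `Ψ` of `H`. -/
noncomputable def reducedResolvent (Ψ : m → m → 𝕜) (E : m → ℝ) (i₀ : m) : Matrix m m 𝕜 :=
  ∑ j ∈ univ.erase i₀, (((E j - E i₀ : ℝ) : 𝕜))⁻¹ • vecMulVec (Ψ j) (star (Ψ j))

theorem reducedResolvent_mulVec_self {Ψ : m → m → 𝕜}
    (hΨ : ∀ j k, star (Ψ j) ⬝ᵥ Ψ k = if j = k then 1 else 0) (E : m → ℝ) (i₀ : m) :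
    reducedResolvent Ψ E i₀ *ᵥ Ψ i₀ = 0 := by
  rw [reducedResolvent, Matrix.sum_mulVec]
  refine sum_eq_zero fun j hj => ?_
  rw [smul_mulVec, vecMulVec_mulVec, hΨ, if_neg (ne_of_mem_erase hj)]
  simp

theorem reducedResolvent_mul_sub_smul_one {Ψ : m → m → 𝕜}
    (hΨ : ∀ j k, star (Ψ j) ⬝ᵥ Ψ k = if j = k then 1 else 0) {H : Matrix m m 𝕜}
    (hH : H.IsHermitian) {E : m → ℝ} (heig : ∀ j, H *ᵥ Ψ j = (E j : 𝕜) • Ψ j) {i₀ : m}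
    (hsimple : ∀ j, j ≠ i₀ → E j ≠ E i₀) :
    reducedResolvent Ψ E i₀ * (H - (E i₀ : 𝕜) • 1) = 1 - vecMulVec (Ψ i₀) (star (Ψ i₀)) := by
  have hterm : ∀ j ∈ univ.erase i₀, (((E j - E i₀ : ℝ) : 𝕜))⁻¹ • vecMulVec (Ψ j) (star (Ψ j)) *
      (H - (E i₀ : 𝕜) • 1) = vecMulVec (Ψ j) (star (Ψ j)) := by
    intro j hj
    have hne : ((E j - E i₀ : ℝ) : 𝕜) ≠ 0 :=
      RCLike.ofReal_ne_zero.mpr (sub_ne_zero.mpr (hsimple j (ne_of_mem_erase hj)))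
    rw [smul_mul_assoc, vecMulVec_mul, vecMul_sub, hH.star_vecMul_eq_smul (heig j), vecMul_smul,
      vecMul_one, ← sub_smul, ← RCLike.ofReal_sub, vecMulVec_smul, smul_smul,
      inv_mul_cancel₀ hne, one_smul]
  rw [reducedResolvent, sum_mul, sum_congr rfl hterm, sum_erase_eq_sub (mem_univ i₀),
    sum_vecMulVec_star_self_eq_one hΨ]

end RCLike

theorem stmt_13_general (n : ℕ) [NeZero n]
    (H HI : Matrix (Fin n) (Fin n) ℂ)
    (hH : H.IsHermitian)
    (Ψ : Fin n → (Fin n → ℂ)) (E : Fin n → ℝ)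
    (horth : Orthonormal ℂ (fun j => toE (Ψ j)))
    (heig : ∀ j, H.mulVec (Ψ j) = (E j : ℂ) • Ψ j)
    (hground : ∀ j, j ≠ 0 → E 0 < E j)
    (ψ : ℝ → (Fin n → ℂ)) (En : ℝ → ℝ) (ψ' : Fin n → ℂ)
    (hψ0 : ψ 0 = Ψ 0)
    (hψderiv : HasDerivAt ψ ψ' 0)
    (hEdiff : DifferentiableAt ℝ En 0)
    (heig' : ∀ᶠ ε in nhds (0 : ℝ),
      (H + ε • HI).mulVec (ψ ε) = ((En ε : ℝ) : ℂ) • ψ ε)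
    (Pperp Gplus : Matrix (Fin n) (Fin n) ℂ)
    (hPperp : Pperp = 1 - vecMulVec (Ψ 0) (star (Ψ 0)))
    (hGplus : Gplus = ∑ j ∈ Finset.univ.erase 0,
        (((E j - E 0 : ℝ) : ℂ))⁻¹ • vecMulVec (Ψ j) (star (Ψ j))) :
    Pperp.mulVec ψ' = - Gplus.mulVec (HI.mulVec (Ψ 0)) := by
  have hΨ := star_dotProduct_eq_ite_of_orthonormal horth
  have hEn0 : En 0 = E 0 := by
    have hΨ0 : Ψ 0 ≠ 0 := fun h => by simpa [h] using hΨ 0 0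
    have h0 : ((En 0 : ℝ) : ℂ) • Ψ 0 = (E 0 : ℂ) • Ψ 0 := by
      rw [← heig 0, ← hψ0]
      simpa using heig'.self_of_nhds.symm
    exact_mod_cast smul_left_injective ℂ hΨ0 h0
  have hfirst : (H - (E 0 : ℂ) • 1) *ᵥ ψ' = ((deriv En 0 : ℝ) : ℂ) • Ψ 0 - HI *ᵥ Ψ 0 := by
    have hdiff := mulVec_add_mulVec_eq_of_eventually_eigen hψderiv hEdiff.hasDerivAt heig'
    rw [zero_smul, add_zero, hψ0, hEn0] at hdiff
    rw [sub_mulVec, smul_mulVec, one_mulVec]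
    linear_combination hdiff
  have hG : Gplus = reducedResolvent Ψ E 0 := hGplus
  have hP : Gplus * (H - (E 0 : ℂ) • 1) = Pperp := by
    rw [hPperp, hG]
    exact reducedResolvent_mul_sub_smul_one hΨ hH heig fun j hj => (hground j hj).ne'
  rw [← hP, ← mulVec_mulVec, hfirst, mulVec_sub, mulVec_smul, hG, reducedResolvent_mulVec_self hΨ,
    smul_zero, zero_sub]

/-- First-order eigenvector perturbation formula: with `H, H_I` Hermitian,
`Ψ` an orthonormal eigenbasis of `H` with eigenvalues `E`, `E 0` smallest and simple, and a
normalized eigenvector family `ψ(ε)` of `H + ε H_I` with eigenvalue `E(ε)`, differentiable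
at `0` with `ψ(0) = Ψ₀` and derivative `ψ'`, setting `P⊥ = I − Ψ₀Ψ₀*` and
`(H − E₀)⁺ = ∑_{j ≠ 0} (E_j − E_0)⁻¹ Ψ_j Ψ_j*`, one has `P⊥ ψ'(0) = −(H − E₀)⁺ H_I Ψ₀`. -/
theorem stmt_13 (n : ℕ) [NeZero n]
    (H HI : Matrix (Fin n) (Fin n) ℂ)
    (hH : H.IsHermitian) (hHI : HI.IsHermitian)
    (Ψ : Fin n → (Fin n → ℂ)) (E : Fin n → ℝ)
    (horth : Orthonormal ℂ (fun j => toE (Ψ j)))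
    (heig : ∀ j, H.mulVec (Ψ j) = (E j : ℂ) • Ψ j)
    (hground : ∀ j, j ≠ 0 → E 0 < E j)
    (ψ : ℝ → (Fin n → ℂ)) (En : ℝ → ℝ) (ψ' : Fin n → ℂ)
    (hψ0 : ψ 0 = Ψ 0)
    (hψderiv : HasDerivAt ψ ψ' 0)
    (hEdiff : DifferentiableAt ℝ En 0)
    (hnorm : ∀ ε : ℝ, ‖toE (ψ ε)‖ = 1)
    (heig' : ∀ᶠ ε in nhds (0 : ℝ),
      (H + ε • HI).mulVec (ψ ε) = ((En ε : ℝ) : ℂ) • ψ ε)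
    (Pperp Gplus : Matrix (Fin n) (Fin n) ℂ)
    (hPperp : Pperp = 1 - vecMulVec (Ψ 0) (star (Ψ 0)))
    (hGplus : Gplus = ∑ j ∈ Finset.univ.erase 0,
        (((E j - E 0 : ℝ) : ℂ))⁻¹ • vecMulVec (Ψ j) (star (Ψ j))) :
    Pperp.mulVec ψ' = - Gplus.mulVec (HI.mulVec (Ψ 0)) :=
  stmt_13_general n H HI hH Ψ E horth heig hground ψ En ψ' hψ0 hψderiv hEdiff heig' Pperp Gplus
    hPperp hGplus
end
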